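/- arXiv:1605.06632 — 2 statements merged into one kernel-verified Lean document; each statement's English description precedes it below -/
import Mathlib

section
/- For any prime p ≥ 5, H_{⌊p/6⌋} ≡ -2*q_p(2) - (3/2)*q_p(3) (mod p), where H_n is the n-th harmonic number and q_p(a) = (a^{p-1}-1)/p. -/
/-!
Lerch's formula `∑_{k=1}^{p-1} ⌊ak/p⌋ / k ≡ a q_p(a) (mod p)` comes from expanding
`∏ (ak - p⌊ak/p⌋) = ∏ (ak mod p) = (p-1)!` to first order in `p`. For `6 ∤ p` and `0 ≤ k < p`,
`⌊6k/p⌋ + [k ≤ p/6] = 1 + ⌊3k/p⌋ + ⌊2k/p⌋ + [p - k ≤ p/6]`. Dividing by `k` and summing over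
`0 < k < p`, the reflection `k ↦ p - k` kills `∑ 1/k` and turns the last term into `-H_{⌊p/6⌋}`,
so Lerch's formula for `a = 6, 3, 2` and `q_p(6) ≡ q_p(2) + q_p(3)` give
`2 H_{⌊p/6⌋} ≡ -4 q_p(2) - 3 q_p(3)`.
-/

open Finset

def fermatQuotient (p : ℕ) (a : ℤ) : ℤ := (a ^ (p - 1) - 1) / p

section FermatQuotient

variable {p : ℕ} [hp : Fact p.Prime] {a b : ℤ}

theorem mul_fermatQuotient (ha : ¬ (p : ℤ) ∣ a) : p * fermatQuotient p a = a ^ (p - 1) - 1 := by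
  have hcop : IsCoprime a p :=
    ((Nat.prime_iff_prime_int.mp hp.out).irreducible.coprime_iff_not_dvd.mpr ha).symm
  exact Int.mul_ediv_cancel' (Int.ModEq.pow_card_sub_one_eq_one hp.out hcop).symm.dvd

theorem cast_fermatQuotient (ha : ¬ (p : ℤ) ∣ a) :
    (fermatQuotient p a : ℚ) = ((a : ℚ) ^ (p - 1) - 1) / p := by
  rw [eq_div_iff (Nat.cast_ne_zero.mpr hp.out.ne_zero), mul_comm]
  exact_mod_cast mul_fermatQuotient ha

theorem fermatQuotient_mul (ha : ¬ (p : ℤ) ∣ a) (hb : ¬ (p : ℤ) ∣ b) :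
    (fermatQuotient p (a * b) : ZMod p) = fermatQuotient p a + fermatQuotient p b := by
  have hab : ¬ (p : ℤ) ∣ a * b := (Nat.prime_iff_prime_int.mp hp.out).not_dvd_mul ha hb
  have h : fermatQuotient p (a * b) =
      fermatQuotient p a + fermatQuotient p b + p * fermatQuotient p a * fermatQuotient p b := by
    refine mul_left_cancel₀ (Nat.cast_ne_zero.mpr hp.out.ne_zero : (p : ℤ) ≠ 0) ?_
    linear_combination mul_fermatQuotient hab
      - (p * fermatQuotient p b + 1) * mul_fermatQuotient ha - a ^ (p - 1) * mul_fermatQuotient hb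
  simp [h]

end FermatQuotient

theorem Finset.sq_dvd_prod_sub_mul_sub_first_order {R ι : Type*} [CommRing R] [DecidableEq ι]
    (s : Finset ι) (x y : ι → R) (c : R) :
    c ^ 2 ∣ ∏ i ∈ s, (x i - c * y i)
      - (∏ i ∈ s, x i - c * ∑ i ∈ s, y i * ∏ j ∈ s.erase i, x j) := by
  induction s using Finset.induction_on with
  | empty => simp
  | @insert a s ha ih =>
    obtain ⟨d, hd⟩ := ih
    have herase : ∑ i ∈ s, y i * ∏ j ∈ (insert a s).erase i, x j
        = x a * ∑ i ∈ s, y i * ∏ j ∈ s.erase i, x j := by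
      rw [mul_sum]
      refine sum_congr rfl fun i hi => ?_
      rw [erase_insert_of_ne (ne_of_mem_of_not_mem hi ha).symm,
        prod_insert fun h => ha (mem_of_mem_erase h)]
      ring
    rw [prod_insert ha, prod_insert ha, sum_insert ha, erase_insert ha, herase]
    exact ⟨y a * ∑ i ∈ s, y i * ∏ j ∈ s.erase i, x j + (x a - c * y a) * d, by
      linear_combination (x a - c * y a) * hd⟩

theorem Nat.prod_Ico_mul_mod {p a : ℕ} (hp : p.Prime) (ha : ¬ p ∣ a) :
    ∏ k ∈ Ico 1 p, (a * k % p) = ∏ k ∈ Ico 1 p, k := by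
  have hmaps : ∀ k ∈ Ico 1 p, a * k % p ∈ Ico 1 p := by
    intro k hk
    rw [mem_Ico] at hk ⊢
    refine ⟨Nat.pos_of_ne_zero fun h => ?_, Nat.mod_lt _ hp.pos⟩
    rcases hp.dvd_mul.mp (Nat.dvd_of_mod_eq_zero h) with h | h
    · exact ha h
    · exact Nat.not_dvd_of_pos_of_lt hk.1 hk.2 h
  have hinj : Set.InjOn (fun k => a * k % p) (Ico 1 p) := by
    intro k hk j hj hkj
    rw [coe_Ico, Set.mem_Ico] at hk hj
    exact (Nat.ModEq.cancel_left_of_coprime (hp.coprime_iff_not_dvd.mpr ha) hkj).eq_of_lt_of_lt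
      hk.2 hj.2
  exact prod_nbij (fun k => a * k % p) hmaps hinj
    (surjOn_of_injOn_of_card_le _ hmaps hinj le_rfl) fun _ _ => rfl

theorem Nat.six_mul_div_add_ite {p k : ℕ} (hp : ¬ 6 ∣ p) (hk : k < p) :
    6 * k / p + (if k ≤ p / 6 then 1 else 0)
      = 1 + 3 * k / p + 2 * k / p + (if p - k ≤ p / 6 then 1 else 0) := by
  have hq3 : 3 * k / p = 6 * k / p / 2 := by
    rw [Nat.div_div_eq_div_mul, show 6 * k = 3 * k * 2 by ring, Nat.mul_div_mul_right _ _ two_pos]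
  have hq2 : 2 * k / p = 6 * k / p / 3 := by
    rw [Nat.div_div_eq_div_mul, show 6 * k = 2 * k * 3 by ring,
      Nat.mul_div_mul_right _ _ three_pos]
  have hlt : 6 * k / p < 6 := Nat.div_lt_of_lt_mul (by omega)
  have h0 : 6 * k / p = 0 ↔ 6 * k < p := by rw [Nat.div_eq_zero_iff]; omega
  have h5 : 5 ≤ 6 * k / p ↔ 5 * p ≤ 6 * k := Nat.le_div_iff_mul_le (by omega)
  rw [hq3, hq2]
  generalize 6 * k / p = q at *
  split_ifs <;> omega

namespace ZMod

variable {p : ℕ} [hp : Fact p.Prime]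

theorem natCast_ne_zero_of_mem_Ico {k : ℕ} (hk : k ∈ Ico 1 p) : (k : ZMod p) ≠ 0 := by
  rw [mem_Ico] at hk
  rw [Ne, natCast_eq_zero_iff]
  exact Nat.not_dvd_of_pos_of_lt hk.1 hk.2

theorem prod_Ico_one_prime_mul {a : ZMod p} (ha : a ≠ 0) : ∏ k ∈ Ico 1 p, a * k = -1 := by
  rw [prod_mul_distrib, prod_const, Nat.card_Ico, pow_card_sub_one_eq_one ha,
    prod_Ico_one_prime, one_mul]

theorem prod_erase_Ico_one_prime_mul {a : ZMod p} (ha : a ≠ 0) {k : ℕ} (hk : k ∈ Ico 1 p) :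
    ∏ j ∈ (Ico 1 p).erase k, a * j = -(a * k)⁻¹ := by
  have h := mul_prod_erase _ (fun j : ℕ => a * j) hk
  rw [prod_Ico_one_prime_mul ha] at h
  have hak : a * k ≠ 0 := mul_ne_zero ha (natCast_ne_zero_of_mem_Ico hk)
  rw [← inv_mul_cancel_left₀ hak (∏ j ∈ (Ico 1 p).erase k, a * j), h, mul_neg_one]

theorem sum_Ico_mul_div_mul_inv {a : ℕ} (ha : ¬ p ∣ a) :
    ∑ k ∈ Ico 1 p, ((a * k / p : ℕ) : ZMod p) * (k : ZMod p)⁻¹ = a * fermatQuotient p a := by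
  have ha' : (a : ZMod p) ≠ 0 := by rwa [Ne, natCast_eq_zero_iff]
  set S : ℤ := ∑ k ∈ Ico 1 p, ((a * k / p : ℕ) : ℤ) * ∏ j ∈ (Ico 1 p).erase k, ((a : ℤ) * j)
  set q := fermatQuotient p a
  have hexp := (Ico 1 p).sq_dvd_prod_sub_mul_sub_first_order (fun k => (a : ℤ) * k)
    (fun k => ((a * k / p : ℕ) : ℤ)) p
  have hrem : ∀ k : ℕ, (a : ℤ) * k - p * ((a * k / p : ℕ) : ℤ) = ((a * k % p : ℕ) : ℤ) := by
    intro k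
    push_cast
    linear_combination -Int.emod_add_mul_ediv ((a : ℤ) * k) p
  have hperm : ∏ k ∈ Ico 1 p, ((a : ℤ) * k - p * ((a * k / p : ℕ) : ℤ))
      = ∏ k ∈ Ico 1 p, (k : ℤ) := by
    simp only [hrem]
    rw [← Nat.cast_prod, ← Nat.cast_prod, Nat.prod_Ico_mul_mod hp.out ha]
  have hfermat : ∏ k ∈ Ico 1 p, ((a : ℤ) * k) = (p * q + 1) * ∏ k ∈ Ico 1 p, (k : ℤ) := by
    rw [prod_mul_distrib, prod_const, Nat.card_Ico, mul_fermatQuotient (by exact_mod_cast ha)]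
    ring
  have hdvd : (p : ℤ) ∣ S - q * ∏ k ∈ Ico 1 p, (k : ℤ) := by
    rw [hperm, hfermat] at hexp
    refine (mul_dvd_mul_iff_left (by exact_mod_cast hp.out.ne_zero : (p : ℤ) ≠ 0)).mp ?_
    convert hexp using 1 <;> ring
  rw [← intCast_zmod_eq_zero_iff_dvd, Int.cast_sub, sub_eq_zero] at hdvd
  simp only [S, Int.cast_sum, Int.cast_mul, Int.cast_prod, Int.cast_natCast,
    prod_Ico_one_prime] at hdvd
  have hsum : ∑ k ∈ Ico 1 p, ((a * k / p : ℕ) : ZMod p) * -((a : ZMod p) * k)⁻¹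
      = -((a : ZMod p)⁻¹ * ∑ k ∈ Ico 1 p, ((a * k / p : ℕ) : ZMod p) * (k : ZMod p)⁻¹) := by
    rw [mul_sum, ← sum_neg_distrib]
    exact sum_congr rfl fun k _ => by rw [mul_inv]; ring
  rw [sum_congr rfl fun k hk => by rw [prod_erase_Ico_one_prime_mul ha' hk], hsum, mul_neg_one,
    neg_inj] at hdvd
  rw [← hdvd, mul_inv_cancel_left₀ ha']

theorem sum_Ico_sub_mul_inv (g : ℕ → ZMod p) :
    ∑ k ∈ Ico 1 p, g (p - k) * (k : ZMod p)⁻¹ = -∑ k ∈ Ico 1 p, g k * (k : ZMod p)⁻¹ := by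
  have hreflect := sum_Ico_reflect (fun j => g j * ((p - j : ℕ) : ZMod p)⁻¹) 1 (Nat.le_succ p)
  rw [Nat.add_sub_cancel, Nat.add_sub_cancel_left] at hreflect
  rw [← sum_neg_distrib]
  convert hreflect using 1 <;> refine sum_congr rfl fun k hk => ?_
  · rw [Nat.sub_sub_self (mem_Ico.mp hk).2.le]
  · rw [Nat.cast_sub (mem_Ico.mp hk).2.le, natCast_self, zero_sub, inv_neg, mul_neg]

theorem sum_Ico_inv_eq_zero (hp2 : p ≠ 2) : ∑ k ∈ Ico 1 p, (k : ZMod p)⁻¹ = 0 := by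
  have h := sum_Ico_sub_mul_inv (p := p) fun _ => 1
  simp only [one_mul] at h
  have h2 : ((2 : ℕ) : ZMod p) ≠ 0 :=
    natCast_ne_zero_of_mem_Ico (mem_Ico.mpr ⟨one_le_two, hp.out.two_le.lt_of_ne' hp2⟩)
  push_cast at h2
  exact (mul_eq_zero.mp (by linear_combination h : (2 : ZMod p) * _ = 0)).resolve_left h2

theorem sum_Ico_ite_le_mul_inv {m : ℕ} (hm : m < p) :
    ∑ k ∈ Ico 1 p, (if k ≤ m then 1 else 0) * (k : ZMod p)⁻¹ = ∑ k ∈ Icc 1 m, (k : ZMod p)⁻¹ := by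
  simp only [ite_mul, one_mul, zero_mul]
  rw [← sum_filter]
  congr 1
  ext k
  simp only [mem_filter, mem_Ico, mem_Icc]
  omega

theorem sum_Icc_div_six_inv (hp5 : 5 ≤ p) :
    ∑ k ∈ Icc 1 (p / 6), (k : ZMod p)⁻¹
      = -2 * fermatQuotient p 2 - 3 / 2 * fermatQuotient p 3 := by
  have hsmall : ∀ n, 0 < n → n < 5 → ¬ p ∣ n := fun n hn hn5 hd => by
    have := Nat.le_of_dvd hn hd
    omega
  have hp2 := hsmall 2 two_pos (by norm_num)
  have hp3 := hsmall 3 three_pos (by norm_num)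
  have hp6 : ¬ p ∣ 6 := fun h => (hp.out.dvd_mul.mp (show p ∣ 2 * 3 from h)).elim hp2 hp3
  have h6p : ¬ 6 ∣ p := fun h => by
    have := hp.out.eq_one_or_self_of_dvd 2 (dvd_trans ⟨3, rfl⟩ h)
    omega
  have key : ∀ k ∈ Ico 1 p, ((6 * k / p : ℕ) : ZMod p) * (k : ZMod p)⁻¹
      + (if k ≤ p / 6 then 1 else 0) * (k : ZMod p)⁻¹
      = (k : ZMod p)⁻¹ + ((3 * k / p : ℕ) : ZMod p) * (k : ZMod p)⁻¹
        + ((2 * k / p : ℕ) : ZMod p) * (k : ZMod p)⁻¹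
        + (if p - k ≤ p / 6 then 1 else 0) * (k : ZMod p)⁻¹ := by
    intro k hk
    have h := congrArg (Nat.cast : ℕ → ZMod p) (Nat.six_mul_div_add_ite h6p (mem_Ico.mp hk).2)
    push_cast at h
    linear_combination (k : ZMod p)⁻¹ * h
  have hsum := sum_congr rfl key
  simp only [sum_add_distrib] at hsum
  rw [sum_Ico_mul_div_mul_inv hp6, sum_Ico_mul_div_mul_inv hp3, sum_Ico_mul_div_mul_inv hp2,
    sum_Ico_inv_eq_zero (by omega), sum_Ico_sub_mul_inv (fun k => if k ≤ p / 6 then 1 else 0),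
    sum_Ico_ite_le_mul_inv (by omega)] at hsum
  have hq6 : (fermatQuotient p 6 : ZMod p) = fermatQuotient p 2 + fermatQuotient p 3 := by
    simpa using fermatQuotient_mul (p := p) (a := 2) (b := 3) (by exact_mod_cast hp2)
      (by exact_mod_cast hp3)
  have h2 : (2 : ZMod p) ≠ 0 := by
    exact_mod_cast natCast_ne_zero_of_mem_Ico (p := p) (mem_Ico.mpr ⟨one_le_two, by omega⟩)
  push_cast [hq6] at hsum
  refine mul_left_cancel₀ h2 ?_
  linear_combination hsum + 3 * (fermatQuotient p 3 : ZMod p) * mul_inv_cancel₀ h2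

end ZMod

-- `Rat.cast` is a ring homomorphism on the rationals whose denominator does not vanish in `α`.
def Rat.ReducesTo {α : Type*} [DivisionRing α] (r : ℚ) (x : α) : Prop :=
  (r.den : α) ≠ 0 ∧ (r : α) = x

namespace Rat.ReducesTo

variable {α : Type*} [DivisionRing α] {q r : ℚ} {x y : α}

theorem intCast (n : ℤ) : ReducesTo (n : ℚ) (n : α) := by
  simp [ReducesTo]

theorem inv_natCast {n : ℕ} (hn : (n : α) ≠ 0) : ReducesTo (n : ℚ)⁻¹ (n : α)⁻¹ := by
  have hn0 : n ≠ 0 := by rintro rfl; exact hn Nat.cast_zero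
  simp [ReducesTo, hn0, hn]

theorem add (hq : ReducesTo q x) (hr : ReducesTo r y) : ReducesTo (q + r) (x + y) :=
  ⟨ne_zero_of_dvd_ne_zero (by exact_mod_cast mul_ne_zero hq.1 hr.1)
    (Nat.cast_dvd_cast (add_den_dvd q r)), by rw [cast_add_of_ne_zero hq.1 hr.1, hq.2, hr.2]⟩

theorem sub (hq : ReducesTo q x) (hr : ReducesTo r y) : ReducesTo (q - r) (x - y) :=
  ⟨ne_zero_of_dvd_ne_zero (by exact_mod_cast mul_ne_zero hq.1 hr.1)
    (Nat.cast_dvd_cast (sub_den_dvd q r)), by rw [cast_sub_of_ne_zero hq.1 hr.1, hq.2, hr.2]⟩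

theorem mul (hq : ReducesTo q x) (hr : ReducesTo r y) : ReducesTo (q * r) (x * y) :=
  ⟨ne_zero_of_dvd_ne_zero (by exact_mod_cast mul_ne_zero hq.1 hr.1)
    (Nat.cast_dvd_cast (mul_den_dvd q r)), by rw [cast_mul_of_ne_zero hq.1 hr.1, hq.2, hr.2]⟩

theorem sum {ι : Type*} {s : Finset ι} {f : ι → ℚ} {g : ι → α}
    (h : ∀ i ∈ s, ReducesTo (f i) (g i)) : ReducesTo (∑ i ∈ s, f i) (∑ i ∈ s, g i) := by
  classical
  induction s using Finset.induction_on with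
  | empty => simpa using intCast (α := α) 0
  | insert i s hi ih =>
    rw [sum_insert hi, sum_insert hi]
    exact (h i (mem_insert_self i s)).add (ih fun j hj => h j (mem_insert_of_mem hj))

theorem dvd_num {p : ℕ} [Fact p.Prime] (h : ReducesTo r (0 : ZMod p)) : (p : ℤ) ∣ r.num := by
  rw [← ZMod.intCast_zmod_eq_zero_iff_dvd]
  have h0 := h.2
  rwa [cast_def, div_eq_zero_iff, or_iff_left h.1] at h0

end Rat.ReducesTo

theorem harmonic_sixth_cong (p : ℕ) (hp : p.Prime) (hp5 : 5 ≤ p) :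
    (p : ℤ) ∣ ((∑ i ∈ Finset.Icc 1 (p / 6), (1 : ℚ) / i)
      - (-2 * ((2 ^ (p - 1) - 1 : ℚ) / p) - (3 / 2) * ((3 ^ (p - 1) - 1 : ℚ) / p))).num := by
  have := Fact.mk hp
  have hunit : ∀ n ∈ Ico 1 p, ¬ (p : ℤ) ∣ n := fun n hn h => ZMod.natCast_ne_zero_of_mem_Ico hn
    ((ZMod.natCast_eq_zero_iff n p).mpr (Int.natCast_dvd_natCast.mp h))
  have h2 : (2 : ℕ) ∈ Ico 1 p := mem_Ico.mpr ⟨one_le_two, by omega⟩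
  have hq2 := cast_fermatQuotient (hunit 2 h2)
  have hq3 := cast_fermatQuotient (hunit 3 (mem_Ico.mpr ⟨by norm_num, by omega⟩))
  push_cast at hq2 hq3
  rw [← hq2, ← hq3]
  have hH : Rat.ReducesTo (∑ i ∈ Icc 1 (p / 6), (1 : ℚ) / i)
      (∑ i ∈ Icc 1 (p / 6), (i : ZMod p)⁻¹) := .sum fun i hi => by
    have hi := mem_Icc.mp hi
    simpa only [one_div] using
      .inv_natCast (ZMod.natCast_ne_zero_of_mem_Ico (mem_Ico.mpr ⟨hi.1, by omega⟩))
  refine Rat.ReducesTo.dvd_num ?_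
  convert hH.sub (((Rat.ReducesTo.intCast (-2)).mul (.intCast (fermatQuotient p 2))).sub
    (((Rat.ReducesTo.intCast 3).mul (.inv_natCast (ZMod.natCast_ne_zero_of_mem_Ico h2))).mul
      (.intCast (fermatQuotient p 3)))) using 1
  · push_cast
    ring
  · rw [ZMod.sum_Icc_div_six_inv hp5]
    push_cast
    ring
end

section
/- Let p ≥ 5 be a prime. Then ∑_{k=0}^{p-1} C(2k,k)^2 / 16^k ≡ (-1)^{(p-1)/2} (mod p^2), where the left side is interpreted as a rational number whose denominator is coprime to p, and the Legendre symbol (-1/p) = (-1)^{(p-1)/2}. -/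
/-!
Write `p = 2n + 1` and `T(x, k) = ∏_{j<k} ((2j+1)² - x²) / (4^k k!²)`. Then the `k`-th summand
is `T(0, k)`, while `T(p, k) = (-1)^k C(n,k) C(n+k,k)`. For `k < p` the denominator is prime to
`p` and the two numerators agree modulo `p²`, factor by factor. So the sum is congruent to
`∑_k (-1)^k C(n,k) C(n+k,k)`, which is the Chu–Vandermonde sum `∑_k C(n, n-k) C(-n-1, k) =
C(-1, n) = (-1)^n`.
-/

open Finset Nat

theorem Nat.centralBinom_mul_factorial (k : ℕ) :
    centralBinom k * k ! = 2 ^ k * ∏ j ∈ range k, (2 * j + 1) := by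
  induction k with
  | zero => simp
  | succ k ih =>
    rw [prod_range_succ, factorial_succ, mul_left_comm, ← mul_assoc, succ_mul_centralBinom_succ]
    linear_combination (2 * (2 * k + 1)) * ih

theorem Ring.choose_neg_natCast_sub_one (n k : ℕ) :
    Ring.choose (-(n : ℤ) - 1) k = (-1) ^ k * (n + k).choose k := by
  rw [sub_eq_add_neg, ← neg_add, Ring.choose_neg,
    show (n : ℤ) + 1 + k - 1 = ((n + k : ℕ) : ℤ) by push_cast; ring,
    Ring.choose_natCast, Int.negOnePow_def, Units.smul_def, zpow_natCast]
  simp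

theorem sum_range_neg_one_pow_mul_choose_mul_add_choose (n : ℕ) :
    ∑ k ∈ range (n + 1), (-1 : ℤ) ^ k * n.choose k * (n + k).choose k = (-1) ^ n := by
  have hvand := Ring.add_choose_eq (r := (n : ℤ)) (s := -(n : ℤ) - 1) n (Commute.all _ _)
  rw [show (n : ℤ) + (-(n : ℤ) - 1) = -((0 : ℕ) : ℤ) - 1 by push_cast; ring,
    Ring.choose_neg_natCast_sub_one, ← Nat.sum_antidiagonal_swap] at hvand
  simp only [Prod.fst_swap, Prod.snd_swap] at hvand
  rw [Nat.sum_antidiagonal_eq_sum_range_succ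
    (fun j i => Ring.choose (n : ℤ) i * Ring.choose (-(n : ℤ) - 1) j)] at hvand
  simp only [Ring.choose_natCast, Ring.choose_neg_natCast_sub_one, zero_add, choose_self,
    Nat.cast_one, mul_one] at hvand
  rw [hvand]
  refine sum_congr rfl fun k hk => ?_
  rw [choose_symm (by simpa [Nat.lt_succ_iff] using hk)]
  ring

theorem padicNorm_intCast_div_natCast_le {p n : ℕ} [Fact p.Prime] {z : ℤ} {d : ℕ}
    (hz : ((p ^ n : ℕ) : ℤ) ∣ z) (hd : ¬ p ∣ d) :
    padicNorm p (z / d) ≤ (p : ℚ) ^ (-n : ℤ) := by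
  rw [padicNorm.div, (padicNorm.nat_eq_one_iff d).2 hd, div_one]
  exact padicNorm.dvd_iff_norm_le.1 hz

theorem Rat.pow_dvd_num_of_padicNorm_le {p n : ℕ} [Fact p.Prime] {q : ℚ}
    (h : padicNorm p q ≤ (p : ℚ) ^ (-n : ℤ)) : (p : ℤ) ^ n ∣ q.num := by
  have hnum : padicNorm p q.num ≤ (p : ℚ) ^ (-n : ℤ) := by
    rw [← Rat.mul_den_eq_num, padicNorm.mul]
    exact (mul_le_of_le_one_right (padicNorm.nonneg q) (padicNorm.of_nat _)).trans h
  exact_mod_cast padicNorm.dvd_iff_norm_le.2 hnum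

/-- The hypergeometric coefficient `((1 - x)/2)_k ((1 + x)/2)_k / k!²`, written with an integer
numerator and a natural denominator. -/
def oddSqTerm (x : ℤ) (k : ℕ) : ℚ :=
  ((∏ j ∈ range k, ((2 * j + 1) ^ 2 - x ^ 2) : ℤ) : ℚ) / ((4 ^ k * k ! ^ 2 : ℕ) : ℚ)

theorem oddSqTerm_zero (k : ℕ) : oddSqTerm 0 k = (centralBinom k : ℚ) ^ 2 / 16 ^ k := by
  have h : (centralBinom k * k ! : ℚ) = 2 ^ k * ∏ j ∈ range k, (2 * (j : ℚ) + 1) := by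
    exact_mod_cast centralBinom_mul_factorial k
  rw [oddSqTerm, div_eq_div_iff (by positivity) (by positivity)]
  push_cast
  simp only [sub_zero, prod_pow]
  rw [show (16 : ℚ) ^ k = (2 ^ k) ^ 2 * 4 ^ k by rw [sq, ← mul_pow, ← mul_pow]; norm_num]
  linear_combination
    (-(4 : ℚ) ^ k * (centralBinom k * k ! + 2 ^ k * ∏ j ∈ range k, (2 * (j : ℚ) + 1))) * h

theorem prod_range_odd_sq_sub_odd_sq (n k : ℕ) :
    ∏ j ∈ range k, ((2 * j + 1) ^ 2 - (2 * n + 1) ^ 2 : ℤ)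
      = (-4) ^ k * n.descFactorial k * (n + 1).ascFactorial k := by
  calc ∏ j ∈ range k, ((2 * j + 1) ^ 2 - (2 * n + 1) ^ 2 : ℤ)
      = ∏ j ∈ range k, (-4 * ((n - j : ℤ) * (n + 1 + j : ℕ))) :=
        prod_congr rfl fun j _ => by push_cast; ring
    _ = _ := by
      rw [prod_mul_distrib, prod_mul_distrib, prod_const, card_range,
        ← descPochhammer_eval_eq_prod_range, descPochhammer_eval_eq_descFactorial,
        ascFactorial_eq_prod_range]
      push_cast
      ring

theorem oddSqTerm_two_mul_add_one (n k : ℕ) :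
    oddSqTerm (2 * n + 1) k = (-1) ^ k * n.choose k * (n + k).choose k := by
  rw [oddSqTerm, prod_range_odd_sq_sub_odd_sq, descFactorial_eq_factorial_mul_choose,
    ascFactorial_eq_factorial_mul_choose, div_eq_iff (by positivity)]
  push_cast
  rw [show (-4 : ℚ) = (-1) * 4 by norm_num, mul_pow]
  ring

theorem padicNorm_oddSqTerm_sub_le {p n k : ℕ} [Fact p.Prime] (hp : p ≠ 2) (hk : k < p)
    {x y : ℤ} (hxy : x ^ 2 ≡ y ^ 2 [ZMOD p ^ n]) :
    padicNorm p (oddSqTerm x k - oddSqTerm y k) ≤ (p : ℚ) ^ (-n : ℤ) := by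
  have hprod : ∏ j ∈ range k, ((2 * j + 1) ^ 2 - y ^ 2 : ℤ)
      ≡ ∏ j ∈ range k, ((2 * j + 1) ^ 2 - x ^ 2 : ℤ) [ZMOD p ^ n] :=
    Int.ModEq.prod fun j _ => hxy.symm.sub_left _
  have hden : ¬ p ∣ 4 ^ k * k ! ^ 2 := by
    have hp' := Fact.out (p := p.Prime)
    rw [hp'.dvd_mul, show 4 = 2 ^ 2 by rfl, ← pow_mul]
    rintro (h | h)
    · exact hp ((prime_dvd_prime_iff_eq hp' prime_two).1 (hp'.dvd_of_dvd_pow h))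
    · exact hk.not_ge ((hp'.dvd_factorial).1 (hp'.dvd_of_dvd_pow h))
  rw [oddSqTerm, oddSqTerm, ← sub_div, ← Int.cast_sub]
  exact padicNorm_intCast_div_natCast_le (by exact_mod_cast hprod.dvd) hden

theorem rv_half_supercongruence (p : ℕ) (hp : p.Prime) (hp5 : 5 ≤ p) :
    ((p : ℤ) ^ 2) ∣
      ((∑ k ∈ Finset.range p, (Nat.choose (2 * k) k : ℚ) ^ 2 / 16 ^ k)
        - (-1 : ℚ) ^ ((p - 1) / 2)).num := by
  have : Fact p.Prime := ⟨hp⟩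
  obtain ⟨n, rfl⟩ := hp.odd_of_ne_two (by omega)
  have hsum : ∑ k ∈ range (2 * n + 1), oddSqTerm (2 * n + 1) k = (-1) ^ n := by
    rw [← sum_subset (range_subset_range.2 (show n + 1 ≤ 2 * n + 1 by omega)) fun k _ hk => ?_]
    · simp only [oddSqTerm_two_mul_add_one]
      exact_mod_cast sum_range_neg_one_pow_mul_choose_mul_add_choose n
    · rw [oddSqTerm_two_mul_add_one, choose_eq_zero_of_lt (by simpa using hk)]
      simp
  apply Rat.pow_dvd_num_of_padicNorm_le
  rw [show (2 * n + 1 - 1) / 2 = n by omega, ← hsum, ← sum_sub_distrib]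
  refine padicNorm.sum_le' (fun k hk => ?_) (by positivity)
  rw [← centralBinom_eq_two_mul_choose, ← oddSqTerm_zero]
  have hterm := padicNorm_oddSqTerm_sub_le (n := 2) (x := 0) (y := 2 * n + 1) (by omega)
    (mem_range.1 hk) (by simp [Int.ModEq])
  exact_mod_cast hterm
end
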